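/- Fix p < -1 and r > 1. Then the function α ↦ Θ_p{α, r} is monotone increasing on (0, 1): for all 0 < α₁ ≤ α₂ < 1, one has Θ_p{α₁, r} ≤ Θ_p{α₂, r}. -/

import Mathlib

/-!
For `p < 0` and `α² ≤ 1`, `F_p(·, α, r)` is a constant plus `c s^{2p} - s² - α²r²s⁻²` with `c ≤ 0`,
hence strictly concave on `s > 0`. It vanishes at `s = 1` and `s = r`, so it is positive in between
and, by concavity, grows at least linearly away from both endpoints; this makes `1/√F_p`
integrable. Moreover `F_p` is affine in `α²` with slope `H_p(s)/s²`, and for `p ≤ -1` the function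
`H_p` is convex in `s` and vanishes at `1` and `r`, hence is nonpositive on `[1, r]`. So `F_p`
decreases pointwise as `α` grows, and `Θ_p` increases.
-/

open Real Filter

/-- `F_p(s, α, r) = ((1 - s^{2p})/(1 - r^{2p}))(r² + α²)
  + ((s^{2p} - r^{2p})/(1 - r^{2p}))(1 + α² r²) - s² - α² r² s⁻²`. -/
noncomputable def Fp (p α r s : ℝ) : ℝ :=
  (1 - s ^ (2 * p)) / (1 - r ^ (2 * p)) * (r ^ 2 + α ^ 2) +
  (s ^ (2 * p) - r ^ (2 * p)) / (1 - r ^ (2 * p)) * (1 + α ^ 2 * r ^ 2) -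
  s ^ 2 - α ^ 2 * r ^ 2 * s ^ (-2 : ℝ)

/-- The period function `Θ_p{α, r} = ∫_1^r ds / √(F_p(s, α, r))`. -/
noncomputable def Theta (p α r : ℝ) : ℝ :=
  ∫ s in (1 : ℝ)..r, (Real.sqrt (Fp p α r s))⁻¹

open Set MeasureTheory

lemma convexOn_rpow_of_nonpos {q : ℝ} (hq : q ≤ 0) : ConvexOn ℝ (Ioi 0) fun x : ℝ => x ^ q := by
  refine convexOn_of_hasDerivWithinAt2_nonneg (convex_Ioi 0) (f' := fun x => q * x ^ (q - 1))
    (f'' := fun x => q * ((q - 1) * x ^ (q - 1 - 1)))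
    (fun x hx => (continuousAt_rpow_const x q (.inl (ne_of_gt hx))).continuousWithinAt)
    ?_ ?_ ?_ <;> rw [interior_Ioi] <;> intro x (hx : 0 < x)
  · exact (hasDerivAt_rpow_const (.inl hx.ne')).hasDerivWithinAt
  · exact ((hasDerivAt_rpow_const (.inl hx.ne')).const_mul q).hasDerivWithinAt
  · have := rpow_pos_of_pos hx (q - 1 - 1)
    exact mul_nonneg_of_nonpos_of_nonpos hq (mul_nonpos_of_nonpos_of_nonneg (by linarith) this.le)

lemma ConcaveOn.mul_le_of_apply_left_eq_zero {f : ℝ → ℝ} {a c s : ℝ} (hac : a < c)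
    (hf : ConcaveOn ℝ (Icc a c) f) (hfa : f a = 0) (hs : s ∈ Icc a c) :
    (s - a) / (c - a) * f c ≤ f s := by
  have hca : 0 < c - a := by linarith
  have key := hf.2 (left_mem_Icc.2 hac.le) (right_mem_Icc.2 hac.le)
    (div_nonneg (sub_nonneg.2 hs.2) hca.le) (div_nonneg (sub_nonneg.2 hs.1) hca.le)
    (by field_simp; ring)
  have hcomb : (c - s) / (c - a) * a + (s - a) / (c - a) * c = s := by field_simp; ring
  simpa only [smul_eq_mul, hcomb, hfa, mul_zero, zero_add] using key

lemma StrictConcaveOn.pos_of_apply_eq_zero {f : ℝ → ℝ} {a b s : ℝ}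
    (hf : StrictConcaveOn ℝ (Icc a b) f) (hfa : f a = 0) (hfb : f b = 0) (hs : s ∈ Ioo a b) :
    0 < f s := by
  have hab : a < b := hs.1.trans hs.2
  simpa [hfa, hfb] using hf.lt_on_openSegment (left_mem_Icc.2 hab.le) (right_mem_Icc.2 hab.le)
    hab.ne (by rwa [openSegment_eq_Ioo hab])

lemma ConcaveOn.intervalIntegrable_inv_sqrt_of_apply_left_eq_zero {f : ℝ → ℝ} {a c : ℝ}
    (hac : a < c) (hf : ConcaveOn ℝ (Icc a c) f) (hfa : f a = 0) (hfc : 0 < f c) :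
    IntervalIntegrable (fun s => (√(f s))⁻¹) volume a c := by
  set κ := f c / (c - a)
  have hκ : 0 < κ := div_pos hfc (by linarith)
  have hmajorant : IntervalIntegrable (fun s => (√κ)⁻¹ * (s - a) ^ (-(1 / 2) : ℝ)) volume a c := by
    have := ((intervalIntegral.intervalIntegrable_rpow' (a := 0) (b := c - a)
      (by norm_num : (-1 : ℝ) < -(1 / 2))).comp_sub_right a).const_mul (√κ)⁻¹
    simpa using this
  refine hmajorant.mono_fun' ?_ ?_ <;> rw [uIoc_of_le hac.le]
  · rw [← Measure.restrict_congr_set Ioo_ae_eq_Ioc]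
    refine (continuous_sqrt.measurable.inv.comp_aemeasurable ?_).aestronglyMeasurable
    exact ((interior_Icc (a := a) (b := c)) ▸ hf.continuousOn_interior).aestronglyMeasurable
      measurableSet_Ioo |>.aemeasurable
  · filter_upwards [ae_restrict_mem measurableSet_Ioc] with s hs
    have hlin : κ * (s - a) ≤ f s := by
      have := hf.mul_le_of_apply_left_eq_zero hac hfa (Ioc_subset_Icc_self hs)
      calc κ * (s - a) = (s - a) / (c - a) * f c := by ring
        _ ≤ f s := this
    have hpos : 0 < κ * (s - a) := mul_pos hκ (sub_pos.2 hs.1)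
    calc ‖(√(f s))⁻¹‖ = (√(f s))⁻¹ := by rw [Real.norm_eq_abs, abs_of_nonneg (by positivity)]
      _ ≤ (√(κ * (s - a)))⁻¹ := inv_anti₀ (sqrt_pos.2 hpos) (sqrt_le_sqrt hlin)
      _ = (√κ)⁻¹ * (s - a) ^ (-(1 / 2) : ℝ) := by
        rw [sqrt_mul hκ.le, mul_inv, sqrt_eq_rpow (s - a), ← rpow_neg (sub_pos.2 hs.1).le]

lemma StrictConcaveOn.intervalIntegrable_inv_sqrt {f : ℝ → ℝ} {a b : ℝ} (hab : a < b)
    (hf : StrictConcaveOn ℝ (Icc a b) f) (hfa : f a = 0) (hfb : f b = 0) :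
    IntervalIntegrable (fun s => (√(f s))⁻¹) volume a b := by
  set m := (a + b) / 2 with hm
  have ham : a < m := by linarith
  have hmb : m < b := by linarith
  have hfm : 0 < f m := hf.pos_of_apply_eq_zero hfa hfb ⟨ham, hmb⟩
  have hleft := (hf.concaveOn.subset (Icc_subset_Icc_right hmb.le) (convex_Icc a m)
    ).intervalIntegrable_inv_sqrt_of_apply_left_eq_zero ham hfa hfm
  have hreflected : ConcaveOn ℝ (Icc (-b) (-m)) fun x => f (-x) := by
    rw [← neg_Icc]
    exact (hf.concaveOn.subset (Icc_subset_Icc_left ham.le) (convex_Icc m b)).comp_linearMap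
      (-LinearMap.id)
  have hright := hreflected.intervalIntegrable_inv_sqrt_of_apply_left_eq_zero (by linarith)
    (by simpa using hfb) (by simpa using hfm)
  exact hleft.trans (by simpa using (IntervalIntegrable.iff_comp_neg).mpr hright.symm)

section Fp

variable {p α r s : ℝ}

lemma Fp_eq (p α r s : ℝ) : Fp p α r s =
    ((r ^ 2 + α ^ 2) - r ^ (2 * p) * (1 + α ^ 2 * r ^ 2)) / (1 - r ^ (2 * p)) +
      (1 - α ^ 2) * (1 - r ^ 2) / (1 - r ^ (2 * p)) * s ^ (2 * p) - s ^ 2 -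
      α ^ 2 * r ^ 2 * s ^ (-2 : ℝ) := by
  unfold Fp
  ring

lemma Fp_strictConcaveOn (hp : p < 0) (hr : 1 < r) (hα : α ^ 2 ≤ 1) :
    StrictConcaveOn ℝ (Ioi 0) (Fp p α r) := by
  have hD : 0 < 1 - r ^ (2 * p) := sub_pos.2 (rpow_lt_one_of_one_lt_of_neg hr (by linarith))
  have hc : 0 ≤ -((1 - α ^ 2) * (1 - r ^ 2) / (1 - r ^ (2 * p))) :=
    neg_nonneg.2 (div_nonpos_of_nonpos_of_nonneg
      (mul_nonpos_of_nonneg_of_nonpos (by linarith) (by nlinarith)) hD.le)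
  have hsq : StrictConvexOn ℝ (Ioi 0) fun x : ℝ => x ^ 2 :=
    (Even.strictConvexOn_pow even_two two_ne_zero).subset (subset_univ _) (convex_Ioi 0)
  have hconvex := (((convexOn_rpow_of_nonpos (by linarith : 2 * p ≤ 0)).smul hc).add
    ((convexOn_rpow_of_nonpos (by norm_num : (-2 : ℝ) ≤ 0)).smul
      (by positivity : 0 ≤ α ^ 2 * r ^ 2))).add_strictConvexOn hsq
  refine (hconvex.neg.add_const
    (((r ^ 2 + α ^ 2) - r ^ (2 * p) * (1 + α ^ 2 * r ^ 2)) / (1 - r ^ (2 * p)))).congr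
    fun s _ => ?_
  simp only [Fp_eq, Pi.add_apply, Pi.neg_apply, smul_eq_mul]
  ring

lemma Fp_one (h : r ^ (2 * p) ≠ 1) : Fp p α r 1 = 0 := by
  have : 1 - r ^ (2 * p) ≠ 0 := sub_ne_zero.2 h.symm
  unfold Fp
  simp only [one_rpow, one_pow]
  field_simp
  ring

lemma Fp_self (hr : 0 < r) (h : r ^ (2 * p) ≠ 1) : Fp p α r r = 0 := by
  have : 1 - r ^ (2 * p) ≠ 0 := sub_ne_zero.2 h.symm
  unfold Fp
  rw [rpow_neg hr.le, rpow_two]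
  field_simp
  ring

/-- `s² · ∂F_p/∂(α²)`. -/
noncomputable def Hp (p r s : ℝ) : ℝ :=
  ((1 - r ^ (2 * p + 2)) * s ^ 2 + (r ^ 2 - 1) * s ^ (2 * p + 2)) / (1 - r ^ (2 * p)) - r ^ 2

lemma Fp_eq_add_sq_mul (hr : 0 < r) (hs : 0 < s) :
    Fp p α r s = Fp p 0 r s + α ^ 2 * (Hp p r s / s ^ 2) := by
  unfold Fp Hp
  simp only [rpow_add hs, rpow_add hr, rpow_neg hs.le, rpow_two]
  field_simp
  ring

lemma Hp_nonpos (hp : p ≤ -1) (hr : 1 < r) (hs : s ∈ Icc 1 r) : Hp p r s ≤ 0 := by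
  have hD : 0 < 1 - r ^ (2 * p) := sub_pos.2 (rpow_lt_one_of_one_lt_of_neg hr (by linarith))
  have hr2 : r ^ (2 * p + 2) = r ^ (2 * p) * r ^ 2 := by rw [rpow_add (by linarith), rpow_two]
  have hconvex : ConvexOn ℝ (Ioi 0) (Hp p r) := by
    have h1 : 0 ≤ (1 - r ^ (2 * p + 2)) / (1 - r ^ (2 * p)) :=
      div_nonneg (sub_nonneg.2 (rpow_le_one_of_one_le_of_nonpos hr.le (by linarith))) hD.le
    have h2 : 0 ≤ (r ^ 2 - 1) / (1 - r ^ (2 * p)) := div_nonneg (by nlinarith) hD.le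
    have hsq : ConvexOn ℝ (Ioi 0) fun x : ℝ => x ^ 2 :=
      (even_two.convexOn_pow).subset (subset_univ _) (convex_Ioi 0)
    refine (((hsq.smul h1).add
      ((convexOn_rpow_of_nonpos (q := 2 * p + 2) (by linarith)).smul h2)).add_const
      (-r ^ 2)).congr fun s _ => ?_
    simp only [Hp, Pi.add_apply, smul_eq_mul]
    ring
  have hHp_one : Hp p r 1 = 0 := by
    unfold Hp
    rw [one_rpow, hr2]
    field_simp
    ring
  have hHp_self : Hp p r r = 0 := by
    unfold Hp
    rw [hr2]
    field_simp
    ring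
  have hr0 : (0 : ℝ) < r := by linarith
  simpa [hHp_one, hHp_self] using hconvex.le_on_segment (mem_Ioi.2 one_pos) (mem_Ioi.2 hr0)
    (by rwa [segment_eq_Icc hr.le])

lemma Fp_le_Fp_of_sq_le {α₁ α₂ : ℝ} (hp : p ≤ -1) (hr : 1 < r) (hα : α₁ ^ 2 ≤ α₂ ^ 2)
    (hs : s ∈ Icc 1 r) : Fp p α₂ r s ≤ Fp p α₁ r s := by
  have hs0 : 0 < s := one_pos.trans_le hs.1
  rw [Fp_eq_add_sq_mul (by linarith) hs0, Fp_eq_add_sq_mul (α := α₁) (by linarith) hs0]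
  have := div_nonpos_of_nonpos_of_nonneg (Hp_nonpos hp hr hs) (sq_nonneg s)
  nlinarith

end Fp

theorem stmt_16 (p r : ℝ) (hp : p < -1) (hr : 1 < r)
    (α₁ α₂ : ℝ) (hα₁ : 0 < α₁) (h₁₂ : α₁ ≤ α₂) (hα₂ : α₂ < 1) :
    Theta p α₁ r ≤ Theta p α₂ r := by
  have hrp : r ^ (2 * p) ≠ 1 := (rpow_lt_one_of_one_lt_of_neg hr (by linarith)).ne
  have hsq : α₁ ^ 2 ≤ α₂ ^ 2 := pow_le_pow_left₀ hα₁.le h₁₂ 2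
  have hα₂sq : α₂ ^ 2 ≤ 1 := by nlinarith
  have hconcave : ∀ α : ℝ, α ^ 2 ≤ 1 → StrictConcaveOn ℝ (Icc 1 r) (Fp p α r) := fun α hα =>
    (Fp_strictConcaveOn (by linarith) hr hα).subset (fun s hs => one_pos.trans_le hs.1)
      (convex_Icc 1 r)
  have hintegrable : ∀ α : ℝ, α ^ 2 ≤ 1 →
      IntervalIntegrable (fun s => (√(Fp p α r s))⁻¹) volume 1 r := fun α hα =>
    (hconcave α hα).intervalIntegrable_inv_sqrt hr (Fp_one hrp) (Fp_self (by linarith) hrp)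
  refine intervalIntegral.integral_mono_on_of_le_Ioo hr.le (hintegrable α₁ (hsq.trans hα₂sq))
    (hintegrable α₂ hα₂sq) fun s hs => ?_
  have hpos : 0 < Fp p α₂ r s :=
    (hconcave α₂ hα₂sq).pos_of_apply_eq_zero (Fp_one hrp) (Fp_self (by linarith) hrp) hs
  exact inv_anti₀ (sqrt_pos.2 hpos)
    (sqrt_le_sqrt (Fp_le_Fp_of_sq_le hp.le hr hsq (Ioo_subset_Icc_self hs)))
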